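/- For every finite word u over Σ that is a prefix of some word in K, there exists a finite word u' over {a, b, c, 1, 2, 3, 4, 5, 6} such that for every infinite word w over Σ, the word u·u'·w belongs to K if and only if w belongs to K. -/

import Mathlib

/-- The finite factor `w[m..n)` of the infinite word `w`, as a list. -/
def wordSegment {σ : Type} (w : ℕ → σ) (m n : ℕ) : List σ :=
  (List.range (n - m)).map fun i => w (m + i)

/-- `omegaPow X`: the infinite words that can be written as an infinite
concatenation of finite words, each belonging to `X`. -/
def omegaPow {σ : Type} (X : Set (List σ)) : Set (ℕ → σ) :=
  {w | ∃ φ : ℕ → ℕ, φ 0 = 0 ∧ StrictMono φ ∧ ∀ k, wordSegment w (φ k) (φ (k + 1)) ∈ X}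

/-- The alphabet `Σ = {a, b, c, 1, …, 6, r₁, …, r₆, y}` (with `num i` the digit
`i+1` and `res i` the reset letter `r_{i+1}`). -/
inductive Al : Type
  | a | b | c
  | num (i : Fin 6)
  | res (i : Fin 6)
  | y
deriving DecidableEq, Fintype

/-- The states of the classifier DFA. -/
inductive CSt : Type
  | p | q | t | s | r
  | ell (i : Fin 6)
deriving DecidableEq, Fintype

/-- The (partial) transition function of the classifier. A digit `num i` belongs
to `E = {1,2,3}` iff `i.val < 3`, and to `F = {4,5,6}` otherwise. -/
def clStep : CSt → Al → Option CSt
  | .p, .b => some .p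
  | .p, .num _ => some .p
  | .p, .y => some .p
  | .p, .a => some .q
  | .p, .c => some .t
  | .q, .a => some .q
  | .q, .num _ => some .p
  | .q, .y => some .p
  | .q, .b => some .r
  | .q, .c => some .s
  | .t, .c => some .t
  | .t, .b => some .p
  | .t, .a => some .q
  | .t, .num i => if i.val < 3 then some (.ell i) else some .p
  | .t, .y => some .p
  | .s, .c => some .s
  | .s, .b => some .r
  | .s, .a => some .q
  | .s, .num i => if i.val < 3 then some (.ell i) else some .p
  | .s, .y => some .p
  | .r, .b => some .r
  | .r, .a => some .q
  | .r, .c => some .s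
  | .r, .num i => if 3 ≤ i.val then some (.ell i) else some .p
  | .r, .y => some .p
  | _, _ => none

/-- The run of the classifier on a finite word, from a given state. -/
def clRun : CSt → List Al → Option CSt
  | c, [] => some c
  | c, l :: w =>
    match clStep c l with
    | some c' => clRun c' w
    | none => none

/-- The language `L_α` (for `α : Fin 6`, representing `L_{α+1}`): the finite
words whose run in the classifier from `p` is defined and ends in `ℓ_α`. -/
def Lcl (α : Fin 6) : Set (List Al) :=
  {w | clRun .p w = some (.ell α)}

/-- `L_main = (Σ^* ⋃_{α≠β} (L_α ∪ {r_α}) L_β L_β Σ^* y)^ω`. -/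
def LMain : Set (ℕ → Al) :=
  omegaPow {w | ∃ α β : Fin 6, α ≠ β ∧ ∃ u v₁ v₂ v₃ z : List Al,
    (v₁ ∈ Lcl α ∨ v₁ = [Al.res α]) ∧ v₂ ∈ Lcl β ∧ v₃ ∈ Lcl β ∧
    w = u ++ v₁ ++ v₂ ++ v₃ ++ z ++ [Al.y]}

/-- Prepend a finite word to an infinite word. -/
def prepend {σ : Type} : List σ → (ℕ → σ) → ℕ → σ
  | [], w => w
  | a :: u, w => fun n =>
    match n with
    | 0 => a
    | n + 1 => prepend u w n

/-- `K`: the infinite words over `Σ` that contain no reset letter and have no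
finite prefix in `L₁ ∪ ⋯ ∪ L₆`. -/
def Kmain : Set (ℕ → Al) :=
  {w | (∀ n, ∀ i : Fin 6, w n ≠ Al.res i) ∧ ∀ n, ∀ α : Fin 6, wordSegment w 0 n ∉ Lcl α}

/-!
A prefix `u` of a word of `K` contains no reset letter and has no prefix in any `L_α`, so the
classifier's run on `u` is defined and ends in a live state (not some `ℓ_α`). From every live
state the word `a 4` leads back to `p`, and since the `ℓ_α` have no outgoing transitions, no
prefix of `u a 4` can end in one of them. Past `u a 4` the classifier restarts in `p`, so
membership in `K` depends only on the rest of the word.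
-/

section Words

variable {σ : Type}

theorem wordSegment_zero_succ (w : ℕ → σ) (n : ℕ) :
    wordSegment w 0 (n + 1) = w 0 :: wordSegment (fun k => w (k + 1)) 0 n := by
  simp [wordSegment, List.range_succ_eq_map, Function.comp_def]

theorem forall_prepend_iff (Q : σ → Prop) (v : List σ) (w : ℕ → σ) :
    (∀ n, Q (prepend v w n)) ↔ (∀ l ∈ v, Q l) ∧ ∀ n, Q (w n) := by
  induction v with
  | nil => simp [prepend]
  | cons a v ih =>
    rw [← Nat.and_forall_add_one, List.forall_mem_cons, and_assoc]
    exact and_congr_right fun _ => ih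

theorem forall_prefix_cons_iff (P : List σ → Prop) (a : σ) (v : List σ) :
    (∀ x, x <+: a :: v → P x) ↔ P [] ∧ ∀ x, x <+: v → P (a :: x) := by
  refine ⟨fun h => ⟨h [] List.nil_prefix, fun x hx => h _ ((List.prefix_cons_inj a).2 hx)⟩, ?_⟩
  rintro ⟨hnil, hcons⟩ x hx
  rcases List.prefix_cons_iff.1 hx with rfl | ⟨t, rfl, ht⟩
  exacts [hnil, hcons t ht]

theorem forall_wordSegment_prepend_iff (P : List σ → Prop) (v : List σ) (w : ℕ → σ) :
    (∀ n, P (wordSegment (prepend v w) 0 n)) ↔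
      (∀ x, x <+: v → P x) ∧ ∀ n, P (v ++ wordSegment w 0 n) := by
  induction v generalizing P with
  | nil =>
    simp only [List.prefix_nil, forall_eq, List.nil_append, prepend]
    exact ⟨fun h => ⟨h 0, h⟩, And.right⟩
  | cons a v ih =>
    have hseg (n : ℕ) : wordSegment (prepend (a :: v) w) 0 (n + 1) =
        a :: wordSegment (prepend v w) 0 n :=
      wordSegment_zero_succ _ n
    rw [← Nat.and_forall_add_one, forall_prefix_cons_iff, and_assoc]
    simp only [hseg, ih fun x => P (a :: x)]
    rfl

end Words

theorem clRun_append (x y : List Al) (c : CSt) :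
    clRun c (x ++ y) = (clRun c x).bind fun c' => clRun c' y := by
  induction x generalizing c with
  | nil => rfl
  | cons l x ih =>
    cases h : clStep c l <;> simp only [List.cons_append, clRun, h, ih, Option.bind_none]

theorem clStep_ne_none : ∀ (c : CSt) (l : Al), (∀ i, c ≠ .ell i) → (∀ i, l ≠ .res i) →
    clStep c l ≠ none := by
  decide

theorem eq_of_clRun_ell (i : Fin 6) (x : List Al) {c : CSt} (h : clRun (.ell i) x = some c) :
    c = .ell i := by
  cases x with
  | nil => exact (Option.some.inj h).symm
  | cons l x => cases l <;> simp [clRun, clStep] at h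

-- `num 3` is the digit `4 ∈ F`; after `a`, it sends every live state back to `p`.
theorem clRun_a_four : ∀ c : CSt, (∀ i, c ≠ .ell i) → clRun c [.a, .num 3] = some .p := by
  decide

theorem clRun_ne_none {c : CSt} {u : List Al} (hres : ∀ l ∈ u, ∀ i, l ≠ Al.res i)
    (hpre : ∀ x, x <+: u → ∀ i, clRun c x ≠ some (.ell i)) : clRun c u ≠ none := by
  induction u generalizing c with
  | nil => simp [clRun]
  | cons l u ih =>
    obtain ⟨c', hc'⟩ := Option.ne_none_iff_exists'.1
      (clStep_ne_none c l (fun i => by simpa [clRun] using hpre [] List.nil_prefix i)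
        (hres l List.mem_cons_self))
    have hcons (x : List Al) : clRun c (l :: x) = clRun c' x := by simp [clRun, hc']
    rw [hcons]
    exact ih (fun l' hl' => hres l' (List.mem_cons_of_mem l hl'))
      fun x hx => hcons x ▸ hpre (l :: x) ((List.prefix_cons_inj l).2 hx)

theorem notMem_Lcl_of_prefix {v x : List Al} (hv : clRun .p v = some .p) (hx : x <+: v)
    (α : Fin 6) : x ∉ Lcl α := by
  intro hα
  obtain ⟨y, rfl⟩ := hx
  rw [clRun_append, show clRun .p x = some (.ell α) from hα, Option.bind_some] at hv
  exact CSt.noConfusion (eq_of_clRun_ell α y hv)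

theorem append_mem_Lcl_iff {v : List Al} (hv : clRun .p v = some .p) (x : List Al) (α : Fin 6) :
    v ++ x ∈ Lcl α ↔ x ∈ Lcl α := by
  simp only [Lcl, Set.mem_ofPred_eq, clRun_append, hv, Option.bind_some]

def IsKPrefix (v : List Al) : Prop :=
  (∀ l ∈ v, ∀ i, l ≠ Al.res i) ∧ ∀ x, x <+: v → ∀ α, x ∉ Lcl α

theorem prepend_mem_Kmain_iff (v : List Al) (w : ℕ → Al) :
    prepend v w ∈ Kmain ↔
      IsKPrefix v ∧ (∀ n i, w n ≠ Al.res i) ∧ ∀ n α, v ++ wordSegment w 0 n ∉ Lcl α := by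
  simp only [Kmain, Set.mem_ofPred_eq, IsKPrefix,
    forall_prepend_iff (fun l => ∀ i, l ≠ Al.res i),
    forall_wordSegment_prepend_iff (fun x => ∀ α, x ∉ Lcl α)]
  exact and_and_and_comm

theorem IsKPrefix.exists_clRun_eq {u : List Al} (hu : IsKPrefix u) :
    ∃ c, clRun .p u = some c ∧ ∀ i, c ≠ .ell i := by
  obtain ⟨c, hc⟩ := Option.ne_none_iff_exists'.1 (clRun_ne_none hu.1 hu.2)
  exact ⟨c, hc, fun i hi => hu.2 u List.prefix_rfl i (hc.trans (congrArg some hi))⟩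

/-- For every finite word `u` that is a prefix of some word of
`K`, there is a finite word `u'` over `{a, b, c, 1, …, 6}` such that appending
`u·u'` in front of an infinite word does not change membership in `K`. -/
theorem reset_word_for_K (u : List Al) (hu : ∃ w : ℕ → Al, prepend u w ∈ Kmain) :
    ∃ u' : List Al, (∀ l ∈ u', (∀ i : Fin 6, l ≠ Al.res i) ∧ l ≠ Al.y) ∧
      ∀ w : ℕ → Al, (prepend (u ++ u') w ∈ Kmain ↔ w ∈ Kmain) := by
  obtain ⟨w₀, hw₀⟩ := hu
  have hu : IsKPrefix u := ((prepend_mem_Kmain_iff u w₀).1 hw₀).1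
  obtain ⟨c, hc, hc_ne⟩ := hu.exists_clRun_eq
  have hreset : clRun .p (u ++ [.a, .num 3]) = some .p := by
    rw [clRun_append, hc]
    exact clRun_a_four c hc_ne
  have hv : IsKPrefix (u ++ [.a, .num 3]) :=
    ⟨List.forall_mem_append.2 ⟨hu.1, by decide⟩, fun x hx => notMem_Lcl_of_prefix hreset hx⟩
  refine ⟨[.a, .num 3], by decide, fun w => ?_⟩
  simp only [prepend_mem_Kmain_iff, append_mem_Lcl_iff hreset, hv, true_and]
  rfl
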